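/- arXiv:1509.08216 — 6 statements merged into one kernel-verified Lean document; each statement's English description precedes it below -/
import Mathlib

section
/- Let Π be a set of permutation patterns, each of length at most k, and let τ be a permutation of length n. Let X be any set of at least min(k+1, n) distinct letters (values) of τ. Then τ avoids Π if and only if both of the following hold: (1) τ is not itself an element of Π, and (2) for each letter x ∈ X, the standardization of the word obtained from τ by deleting the letter x avoids Π. -/
/-- `w` is a permutation of `{1,…,n}`, viewed as a word containing each of `1,…,n` exactly once. -/
def IsPermWord (n : ℕ) (w : List ℕ) : Prop := w.Perm (List.range' 1 n)

/-- The standardization of a word `w` of distinct letters: each letter is replaced by its rank. -/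
def stdize (w : List ℕ) : List ℕ := w.map fun x => (w.filter fun y => decide (y ≤ x)).length

/-- `τ` avoids the set of patterns `P`: no nonempty subsequence of `τ` standardizes to a pattern. -/
def AvoidsSet (P : Set (List ℕ)) (τ : List ℕ) : Prop :=
  ∀ u : List ℕ, u.Sublist τ → u ≠ [] → stdize u ∉ P

/-!
An occurrence of a pattern in `τ` is either all of `τ` or a subsequence with fewer than
`min (k + 1) n ≤ #X` letters. In the second case it misses some `x ∈ X` and so survives in
`τ.erase x`. Standardization does not affect this: it is strictly monotone on the letters of a
word, so it leaves the standardizations of all subsequences unchanged.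
-/

def wordRank (w : List ℕ) (x : ℕ) : ℕ := (w.filter fun y => decide (y ≤ x)).length

lemma stdize_eq_map_wordRank (w : List ℕ) : stdize w = w.map (wordRank w) := rfl

lemma wordRank_strictMonoOn (w : List ℕ) : StrictMonoOn (wordRank w) {x | x ∈ w} := by
  intro y _ x hx hyx
  have hfilter : (w.filter fun z => decide (z ≤ y)) =
      (w.filter fun z => decide (z ≤ x)).filter fun z => decide (z ≤ y) := by
    rw [List.filter_filter]
    refine List.filter_congr fun z _ => ?_
    grind
  rw [wordRank, wordRank, hfilter, List.length_filter_lt_length_iff_exists]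
  exact ⟨x, List.mem_filter.mpr ⟨hx, by simp⟩, by simpa using hyx⟩

lemma stdize_map_of_strictMonoOn {f : ℕ → ℕ} {u : List ℕ} (hf : StrictMonoOn f {x | x ∈ u}) :
    stdize (u.map f) = stdize u := by
  simp only [stdize, List.map_map, List.filter_map, List.length_map]
  refine List.map_congr_left fun x hx => ?_
  simp only [Function.comp_apply]
  congr 1
  refine List.filter_congr fun y hy => ?_
  simp only [Function.comp_apply, decide_eq_decide]
  exact hf.le_iff_le hy hx

lemma range'_one_filter_le {n x : ℕ} (hx : x ≤ n) :
    (List.range' 1 n).filter (fun y => decide (y ≤ x)) = List.range' 1 x := by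
  obtain ⟨m, rfl⟩ := Nat.exists_eq_add_of_le hx
  rw [← List.range'_append_1, List.filter_append, List.filter_eq_self.mpr,
    List.filter_eq_nil_iff.mpr, List.append_nil]
  all_goals
    intro a ha
    simp only [List.mem_range'_1, decide_eq_true_eq] at ha ⊢
    omega

lemma IsPermWord.stdize_eq {n : ℕ} {τ : List ℕ} (hτ : IsPermWord n τ) : stdize τ = τ := by
  conv_rhs => rw [← List.map_id τ]
  refine List.map_congr_left fun x hx => ?_
  have hxn : 1 ≤ x ∧ x < 1 + n := List.mem_range'_1.mp (hτ.mem_iff.mp hx)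
  rw [id, (hτ.filter _).length_eq, range'_one_filter_le (by omega), List.length_range']

lemma AvoidsSet.sublist {P : Set (List ℕ)} {w v : List ℕ} (hw : AvoidsSet P w) (hv : v.Sublist w) :
    AvoidsSet P v :=
  fun u hu => hw u (hu.trans hv)

lemma avoidsSet_stdize_iff {P : Set (List ℕ)} {w : List ℕ} :
    AvoidsSet P (stdize w) ↔ AvoidsSet P w := by
  constructor
  · intro h u hu hne
    rw [← stdize_map_of_strictMonoOn ((wordRank_strictMonoOn w).mono fun a ha => hu.mem ha)]
    exact h _ (hu.map _) (by simpa using hne)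
  · intro h u hu hne
    rw [stdize_eq_map_wordRank] at hu
    obtain ⟨v, hv, rfl⟩ := List.sublist_map_iff.mp hu
    rw [stdize_map_of_strictMonoOn ((wordRank_strictMonoOn w).mono fun a ha => hv.mem ha)]
    exact h v hv (by simpa using hne)

lemma List.Sublist.sublist_erase_of_notMem {α : Type*} [DecidableEq α] {u l : List α} {x : α}
    (h : u.Sublist l) (hx : x ∉ u) : u.Sublist (l.erase x) :=
  List.erase_of_not_mem hx ▸ h.erase x

theorem statement0_general (P : Set (List ℕ)) (k : ℕ)
    (hP : ∀ π ∈ P, IsPermWord π.length π ∧ 1 ≤ π.length ∧ π.length ≤ k)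
    (n : ℕ) (τ : List ℕ) (hτ : IsPermWord n τ)
    (X : Finset ℕ) (hcard : min (k + 1) n ≤ X.card) :
    AvoidsSet P τ ↔ (τ ∉ P ∧ ∀ x ∈ X, AvoidsSet P (stdize (τ.erase x))) := by
  constructor
  · intro hA
    refine ⟨fun hτP => ?_, fun x _ => avoidsSet_stdize_iff.mpr (hA.sublist τ.erase_sublist)⟩
    exact hA τ (.refl τ) (List.ne_nil_of_length_pos (hP τ hτP).2.1) (by rwa [hτ.stdize_eq])
  · rintro ⟨hτP, hErase⟩ u hu hne huP
    have hlen_n : u.length < n := by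
      have hτ_len : τ.length = n := by simpa using hτ.length_eq
      rw [← hτ_len]
      refine lt_of_le_of_ne hu.length_le fun hlen => hτP ?_
      rwa [hu.eq_of_length hlen, hτ.stdize_eq] at huP
    have hlen_k : u.length ≤ k := by simpa [stdize] using (hP _ huP).2.2
    have hcard_lt : u.toFinset.card < X.card := by
      have := u.toFinset_card_le
      omega
    obtain ⟨x, hxX, hxu⟩ := Finset.exists_mem_notMem_of_card_lt_card hcard_lt
    exact avoidsSet_stdize_iff.mp (hErase x hxX) u
      (hu.sublist_erase_of_notMem (by simpa using hxu)) hne huP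

/-- Proposition 1 of the paper. -/
theorem statement0 (P : Set (List ℕ)) (k : ℕ)
    (hP : ∀ π ∈ P, IsPermWord π.length π ∧ 1 ≤ π.length ∧ π.length ≤ k)
    (n : ℕ) (τ : List ℕ) (hτ : IsPermWord n τ)
    (X : Finset ℕ) (hX : ∀ x ∈ X, x ∈ τ) (hcard : min (k + 1) n ≤ X.card) :
    AvoidsSet P τ ↔ (τ ∉ P ∧ ∀ x ∈ X, AvoidsSet P (stdize (τ.erase x))) :=
  statement0_general P k hP n τ hτ X hcard
end

section
/- Let Π be a set of permutation patterns with k = max_{π∈Π}|π|, and let τ ∈ S_n with n > k. Then τ ∈ S_n(Π) if and only if τ↓_i ∈ S_{n−1}(Π) for every i ∈ {1,…,k+1}. -/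
/-- `τ↓_i` for `τ ∈ S_n`: delete the `i`-th largest letter `n - i + 1` and standardize. -/
def delOp (n i : ℕ) (τ : List ℕ) : List ℕ := stdize (τ.erase (n - i + 1))

/-!
Standardization is an order isomorphism on the letters of a word, so a word and its
standardization contain the same patterns; hence `τ↓_i` avoids `P` iff `τ` with the letter
`n - i + 1` deleted does. Conversely, a hit of a pattern of length at most `k` uses at most `k`
letters, so it misses one of the `k + 1` largest letters of `τ` and survives its deletion.
-/

namespace Standardization

def stdRank (w : List ℕ) (x : ℕ) : ℕ := (w.filter fun y => decide (y ≤ x)).length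

theorem stdize_eq_map_stdRank (w : List ℕ) : stdize w = w.map (stdRank w) := rfl

theorem stdRank_mono (w : List ℕ) : Monotone (stdRank w) := fun _ _ hxy =>
  (w.monotone_filter_right fun y hy => by simpa using (of_decide_eq_true hy).trans hxy).length_le

theorem stdRank_lt_stdRank {w : List ℕ} {x y : ℕ} (hx : x ∈ w) (hyx : y < x) :
    stdRank w y < stdRank w x := by
  have hfilter : (w.filter fun z => decide (z ≤ x)).filter (fun z => decide (z ≤ y)) =
      w.filter fun z => decide (z ≤ y) := by
    rw [List.filter_filter]
    exact List.filter_congr fun z _ => by simpa using fun hzy => hzy.trans hyx.le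
  unfold stdRank
  rw [← hfilter, List.length_filter_lt_length_iff_exists]
  exact ⟨x, List.mem_filter.2 ⟨hx, by simp⟩, by simpa using hyx⟩

theorem stdRank_le_stdRank_iff {w : List ℕ} {x y : ℕ} (hx : x ∈ w) :
    stdRank w x ≤ stdRank w y ↔ x ≤ y :=
  ⟨fun h => not_lt.1 fun hyx => (stdRank_lt_stdRank hx hyx).not_ge h, fun h => stdRank_mono w h⟩

theorem stdize_map_of_le_iff {u : List ℕ} {f : ℕ → ℕ}
    (hf : ∀ x ∈ u, ∀ y ∈ u, f y ≤ f x ↔ y ≤ x) : stdize (u.map f) = stdize u := by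
  simp only [stdize, List.map_map, List.filter_map, List.length_map]
  refine List.map_congr_left fun x hx => ?_
  simp only [Function.comp_apply]
  congr 1
  exact List.filter_congr fun y hy => by simp [hf x hx y hy]

theorem stdize_map_stdRank {u w : List ℕ} (huw : u ⊆ w) :
    stdize (u.map (stdRank w)) = stdize u :=
  stdize_map_of_le_iff fun _ _ _ hy => stdRank_le_stdRank_iff (huw hy)

theorem isPermWord_stdize {w : List ℕ} (hw : w.Nodup) : IsPermWord w.length (stdize w) := by
  have hrange : stdize w ⊆ List.range' 1 w.length := by
    intro r hr
    obtain ⟨x, hx, rfl⟩ := List.mem_map.1 hr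
    have hpos : 0 < stdRank w x := List.length_pos_of_mem (List.mem_filter.2 ⟨hx, by simp⟩)
    have hle : stdRank w x ≤ w.length := List.length_filter_le _ _
    exact List.mem_range'_1.2 ⟨hpos, Nat.lt_one_add_iff.2 hle⟩
  have hnodup : (stdize w).Nodup := hw.map_on fun x hx y hy hxy =>
    le_antisymm ((stdRank_le_stdRank_iff hx).1 hxy.le) ((stdRank_le_stdRank_iff hy).1 hxy.ge)
  exact (hnodup.subperm hrange).perm_of_length_le (by simp [stdize])

end Standardization

namespace AvoidsSet

open Standardization

variable {P : Set (List ℕ)}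

theorem of_sublist {w τ : List ℕ} (hτ : AvoidsSet P τ) (hw : w.Sublist τ) : AvoidsSet P w :=
  fun u hu => hτ u (hu.trans hw)

theorem stdize_iff {w : List ℕ} : AvoidsSet P (stdize w) ↔ AvoidsSet P w := by
  constructor
  · intro h u hu hne
    rw [← stdize_map_stdRank hu.subset]
    exact h _ (hu.map _) (by simpa using hne)
  · intro h v hv hne
    rw [stdize_eq_map_stdRank] at hv
    obtain ⟨u, hu, rfl⟩ := List.sublist_map_iff.1 hv
    rw [stdize_map_stdRank hu.subset]
    exact h u hu (by simpa using hne)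

theorem of_forall_erase {k : ℕ} (hP : ∀ π ∈ P, π.length ≤ k) {τ : List ℕ} {S : Finset ℕ}
    (hS : k < S.card) (h : ∀ m ∈ S, AvoidsSet P (τ.erase m)) : AvoidsSet P τ := by
  intro u hu hne hπ
  obtain ⟨m, hmS, hmu⟩ : ∃ m ∈ S, m ∉ u := by
    by_contra! hSu
    have hlen : u.length ≤ k := by simpa [stdize] using hP _ hπ
    have := (Finset.card_le_card fun m hm => List.mem_toFinset.2 (hSu m hm)).trans
      (List.toFinset_card_le u)
    omega
  exact h m hmS u (List.erase_of_not_mem hmu ▸ hu.erase m) hne hπ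

end AvoidsSet

open Standardization

theorem statement1_general (P : Set (List ℕ)) (k : ℕ)
    (hP : ∀ π ∈ P, IsPermWord π.length π ∧ 1 ≤ π.length ∧ π.length ≤ k)
    (n : ℕ) (hn : k < n) (τ : List ℕ) (hτ : IsPermWord n τ) :
    AvoidsSet P τ ↔
      ∀ i, 1 ≤ i → i ≤ k + 1 →
        IsPermWord (n - 1) (delOp n i τ) ∧ AvoidsSet P (delOp n i τ) := by
  have hnodup : τ.Nodup := hτ.nodup_iff.2 List.nodup_range'
  have hlen : τ.length = n := by simpa using hτ.length_eq
  have hmem (m : ℕ) (h1 : 1 ≤ m) (h2 : m ≤ n) : m ∈ τ := by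
    rw [hτ.mem_iff, List.mem_range'_1]
    omega
  have hperm (i : ℕ) (h1 : 1 ≤ i) (h2 : i ≤ k + 1) : IsPermWord (n - 1) (delOp n i τ) := by
    have := isPermWord_stdize (hnodup.erase (n - i + 1))
    rwa [List.length_erase_of_mem (hmem _ (by omega) (by omega)), hlen] at this
  simp only [delOp, AvoidsSet.stdize_iff]
  constructor
  · exact fun h i h1 h2 => ⟨hperm i h1 h2, h.of_sublist List.erase_sublist⟩
  · intro h
    refine AvoidsSet.of_forall_erase (fun π hπ => (hP π hπ).2.2) (S := Finset.Icc (n - k) n)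
      (by rw [Nat.card_Icc]; omega) fun m hm => ?_
    rw [Finset.mem_Icc] at hm
    have := (h (n - m + 1) (by omega) (by omega)).2
    rwa [show n - (n - m + 1) + 1 = m by omega] at this

theorem statement1 (P : Set (List ℕ)) (k : ℕ)
    (hP : ∀ π ∈ P, IsPermWord π.length π ∧ 1 ≤ π.length ∧ π.length ≤ k)
    (hk : ∃ π ∈ P, π.length = k)
    (n : ℕ) (hn : k < n) (τ : List ℕ) (hτ : IsPermWord n τ) :
    AvoidsSet P τ ↔
      ∀ i, 1 ≤ i → i ≤ k + 1 →
        IsPermWord (n - 1) (delOp n i τ) ∧ AvoidsSet P (delOp n i τ) :=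
  statement1_general P k hP n hn τ hτ
end

section
/- Let k ≥ 1 and let τ ∈ S_n avoid the increasing pattern 12⋯k. Suppose the r-upfix of τ is increasing, i.e., the letters n−r+1,…,n appear in τ in increasing order of both position and value. Then every permutation obtained from τ by rearranging which of the values n−r+1,…,n occupy which of their r positions (leaving all other letters fixed) also avoids 12⋯k. -/
/-- The `r`-upfix of `τ ∈ S_n`: the subsequence formed by the letters `n - r + 1, …, n`. -/
def upfix (n r : ℕ) (τ : List ℕ) : List ℕ := τ.filter fun x => decide (n - r + 1 ≤ x)

lemma stdize_cons_of_forall_lt {a : ℕ} {t : List ℕ} (ha : ∀ x ∈ t, a < x) :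
    stdize (a :: t) = 1 :: (stdize t).map (1 + ·) := by
  have hself : ((a :: t).filter fun y => decide (y ≤ a)) = [a] := by
    have : (t.filter fun y => decide (y ≤ a)) = [] :=
      List.filter_eq_nil_iff.2 fun y hy => by simpa using ha y hy
    simp [this]
  have hrest : ∀ x ∈ t, ((a :: t).filter fun y => decide (y ≤ x)).length
      = 1 + (t.filter fun y => decide (y ≤ x)).length := by
    intro x hx
    simp [(ha x hx).le, Nat.add_comm]
  simp only [stdize, List.map_cons, hself, List.map_map]
  exact congrArg _ (List.map_congr_left hrest)

lemma stdize_of_pairwise_lt {u : List ℕ} (hu : u.Pairwise (· < ·)) :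
    stdize u = List.range' 1 u.length := by
  induction u with
  | nil => rfl
  | cons a t ih =>
    obtain ⟨ha, ht⟩ := List.pairwise_cons.1 hu
    rw [stdize_cons_of_forall_lt ha, ih ht, List.map_add_range', List.length_cons,
      List.range'_succ]

lemma pairwise_lt_of_stdize {u : List ℕ} (h : (stdize u).Pairwise (· < ·)) :
    u.Pairwise (· < ·) := by
  have hrank : Monotone fun x => (u.filter fun y => decide (y ≤ x)).length := fun x x' hx =>
    (List.monotone_filter_right u fun y hy =>
      decide_eq_true ((of_decide_eq_true hy).trans hx)).length_le
  exact (List.pairwise_map.1 h).imp hrank.reflect_lt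

lemma stdize_eq_range'_iff {u : List ℕ} {k : ℕ} :
    stdize u = List.range' 1 k ↔ u.Pairwise (· < ·) ∧ u.length = k := by
  constructor
  · intro h
    have hlen : u.length = k := by simpa [stdize] using congrArg List.length h
    exact ⟨pairwise_lt_of_stdize (h ▸ List.pairwise_lt_range' 1), hlen⟩
  · rintro ⟨hu, rfl⟩
    exact stdize_of_pairwise_lt hu

lemma avoidsSet_range'_iff {k : ℕ} {τ : List ℕ} :
    AvoidsSet {List.range' 1 k} τ ↔
      ∀ u : List ℕ, u.Sublist τ → u ≠ [] → u.Pairwise (· < ·) → u.length ≠ k := by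
  simp only [AvoidsSet, Set.mem_singleton_iff, stdize_eq_range'_iff, not_and]

lemma List.eq_of_forall₂_le_of_sum_eq {l₁ l₂ : List ℕ} (h : Forall₂ (· ≤ ·) l₁ l₂)
    (hsum : l₁.sum = l₂.sum) : l₁ = l₂ := by
  induction h with
  | nil => rfl
  | @cons a b t₁ t₂ hab ht ih =>
    have htail := ht.sum_le_sum
    simp only [List.sum_cons] at hsum
    rw [show a = b by omega, ih (by omega)]

lemma map_min_eq_of_perm (m : ℕ) {l l' : List ℕ} (hperm : l.Perm l')
    (hagree : ∀ i, l.getD i 0 ≤ m → l'.getD i 0 = l.getD i 0) :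
    l'.map (min · (m + 1)) = l.map (min · (m + 1)) := by
  refine List.eq_of_forall₂_le_of_sum_eq ?_ (hperm.map _).sum_eq.symm
  refine List.forall₂_iff_get.2 ⟨by simp [hperm.length_eq], fun i h₁ h₂ => ?_⟩
  simp only [List.length_map] at h₁ h₂
  have := hagree i
  simp only [List.get_eq_getElem, List.getElem_map, List.getD_eq_getElem _ _ h₁,
    List.getD_eq_getElem _ _ h₂] at this ⊢
  omega

lemma pairwise_lt_of_map_min_eq {m : ℕ} {u u' : List ℕ} (hu : u.Pairwise (· < ·))
    (hmap : u.map (min · (m + 1)) = u'.map (min · (m + 1)))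
    (hbig : (u'.filter fun x => decide (m + 1 ≤ x)).Pairwise (· < ·)) :
    u'.Pairwise (· < ·) := by
  have hclamped :
      (u.map (min · (m + 1))).Pairwise fun p q => p < q ∨ (p = m + 1 ∧ q = m + 1) :=
    List.pairwise_map.2 (hu.imp fun {a b} _ => by omega)
  rw [hmap, List.pairwise_map] at hclamped
  exact hclamped.imp₂ (fun a b hab hab' => by simp only [decide_eq_true_eq] at hab'; omega)
    (List.pairwise_filter.1 hbig)

theorem statement8_general (k n r : ℕ)
    (τ : List ℕ) (hτ : IsPermWord n τ)
    (hav : AvoidsSet {List.range' 1 k} τ)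
    (hup : (upfix n r τ).Pairwise (· < ·))
    (τ' : List ℕ) (hτ' : IsPermWord n τ')
    (hsmall : ∀ p : ℕ, τ.getD p 0 ≤ n - r → τ'.getD p 0 = τ.getD p 0) :
    AvoidsSet {List.range' 1 k} τ' := by
  rw [avoidsSet_range'_iff] at hav ⊢
  intro u hu hne hinc
  have hclamp := map_min_eq_of_perm (n - r) (hτ.trans hτ'.symm) hsmall
  obtain ⟨u', hu'τ, hmap⟩ := List.sublist_map_iff.1 (hclamp ▸ hu.map (min · (n - r + 1)))
  have hlen : u.length = u'.length := by simpa using congrArg List.length hmap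
  have hne' : u' ≠ [] := List.ne_nil_of_length_pos (hlen ▸ List.length_pos_of_ne_nil hne)
  have hinc' := pairwise_lt_of_map_min_eq hinc hmap (hup.sublist (hu'τ.filter _))
  exact hlen ▸ hav u' hu'τ hne' hinc'

/-- rearranging the top `r` values among their positions preserves
avoidance of the increasing pattern `1 2 ⋯ k`, provided the `r`-upfix of `τ` is increasing.
Here `τ'` is such a rearrangement of `τ`: it is a permutation of `{1,…,n}` agreeing with
`τ` at every position holding a letter `≤ n - r`. -/
theorem statement8 (k n r : ℕ) (hk : 1 ≤ k) (hr : r ≤ n)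
    (τ : List ℕ) (hτ : IsPermWord n τ)
    (hav : AvoidsSet {List.range' 1 k} τ)
    (hup : (upfix n r τ).Pairwise (· < ·))
    (τ' : List ℕ) (hτ' : IsPermWord n τ')
    (hsmall : ∀ p : ℕ, τ.getD p 0 ≤ n - r → τ'.getD p 0 = τ.getD p 0) :
    AvoidsSet {List.range' 1 k} τ' :=
  statement8_general k n r τ hτ hav hup τ' hτ' hsmall
end

section
/- Let k ≥ 1, let ι_k = 12⋯k be the increasing pattern of length k, and let 2 ≤ r ≤ n. Then r·|{τ ∈ S_n(ι_k) : the r-upfix of τ is increasing}| ≤ |{τ ∈ S_n(ι_k) : the (r−1)-upfix of τ is increasing}|. -/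
section Aux

open List

private lemma mem_range1 {m s n : ℕ} : m ∈ List.range' s n ↔ s ≤ m ∧ m < s + n := by
  rw [List.mem_range']
  constructor
  · rintro ⟨i, hi, rfl⟩; omega
  · rintro ⟨h1, h2⟩; exact ⟨m - s, by omega, by omega⟩

private lemma stdize_sorted : ∀ (u : List ℕ), u.Pairwise (· < ·) →
    stdize u = List.range' 1 u.length := by
  intro u
  induction u with
  | nil => intro _; rfl
  | cons x t ih =>
    intro hu
    have hxt : ∀ y ∈ t, x < y := (List.pairwise_cons.mp hu).1
    have ht : t.Pairwise (· < ·) := (List.pairwise_cons.mp hu).2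
    have h1 : ((x :: t).filter fun y => decide (y ≤ x)) = [x] := by
      rw [List.filter_cons_of_pos (by simp)]
      rw [List.filter_eq_nil_iff.mpr (by intro y hy; simpa using Nat.not_le.mpr (hxt y hy))]
    have h2 : (t.map fun y => ((x :: t).filter fun z => decide (z ≤ y)).length)
        = (stdize t).map (· + 1) := by
      rw [stdize, List.map_map]
      apply List.map_congr_left
      intro y hy
      rw [List.filter_cons_of_pos (by simpa using Nat.le_of_lt (hxt y hy))]
      simp [Nat.add_comm]
    have h3 : (stdize t).map (· + 1) = List.range' 2 t.length := by
      rw [ih ht]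
      have := List.map_add_range' (a := 1) 1 t.length 1
      simpa [Nat.add_comm] using this.symm ▸ (by
        apply List.map_congr_left
        intro y _
        omega : ((List.range' 1 t.length).map (· + 1)) = (List.range' 1 t.length).map (1 + ·))
    show List.map _ (x :: t) = _
    rw [List.map_cons, h1]
    simp only [List.length_cons]
    rw [h2, h3, List.range'_succ]
    simp

private lemma sorted_of_stdize {u : List ℕ} {k : ℕ} (h : stdize u = List.range' 1 k) :
    u.length = k ∧ u.Pairwise (· < ·) := by
  have hlen : u.length = k := by
    have := congrArg List.length h
    simpa [stdize] using this
  refine ⟨hlen, ?_⟩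
  rw [List.pairwise_iff_getElem]
  intro i j hi hj hij
  by_contra hle
  push_neg at hle
  have hfi : ∀ (m : ℕ) (hm : m < u.length),
      (u.filter fun y => decide (y ≤ u[m])).length = 1 + m := by
    intro m hm
    have : (stdize u)[m]'(by simpa [stdize] using hm) = 1 + m := by
      rw [List.getElem_of_eq h]
      simp
    simpa [stdize] using this
  have mono : (u.filter fun y => decide (y ≤ u[j])).length
      ≤ (u.filter fun y => decide (y ≤ u[i])).length := by
    rw [← List.countP_eq_length_filter, ← List.countP_eq_length_filter]
    apply List.countP_mono_left
    intro x _ hx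
    simp only [decide_eq_true_eq] at hx ⊢
    omega
  rw [hfi i hi, hfi j hj] at mono
  omega

private lemma take_filter_sublist (p : ℕ → Bool) :
    ∀ (l t s : List ℕ), t ++ s <+ l → (∀ x ∈ t, p x = true) →
      (l.filter p).take t.length ++ s <+ l := by
  intro l
  induction l with
  | nil =>
    intro t s h hp
    rcases List.append_eq_nil_iff.mp (List.sublist_nil.mp h) with ⟨rfl, rfl⟩
    simp
  | cons y l' ih =>
    intro t s h hp
    cases t with
    | nil => simpa using h
    | cons x t' =>
      have hx : p x = true := hp x List.mem_cons_self
      rw [List.cons_append] at h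
      cases h with
      | cons _ h' =>
        have H := ih (x :: t') s h' hp
        by_cases hy : p y = true
        · rw [List.filter_cons_of_pos hy]
          simp only [List.length_cons, List.take_succ_cons, List.cons_append]
          apply List.Sublist.cons₂
          refine List.Sublist.trans (List.Sublist.append_right ?_ s) H
          have h0 := List.take_sublist t'.length ((l'.filter p).take (t'.length + 1))
          rwa [List.take_take, Nat.min_eq_left (Nat.le_succ _)] at h0
        · rw [List.filter_cons_of_neg (by simpa using hy)]
          exact H.cons y
      | cons_cons _ h' =>
        rw [List.filter_cons_of_pos hx]
        simp only [List.length_cons, List.take_succ_cons, List.cons_append]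
        exact (ih t' s h' fun z hz => hp z (List.mem_cons_of_mem _ hz)).cons₂ _

private lemma sorted_split (a : ℕ) : ∀ (u : List ℕ), u.Pairwise (· < ·) →
    u = u.filter (fun x => decide (x < a)) ++ u.filter (fun x => decide (a ≤ x)) := by
  intro u
  induction u with
  | nil => intro _; rfl
  | cons x t ih =>
    intro hu
    have hxt : ∀ y ∈ t, x < y := (List.pairwise_cons.mp hu).1
    have ht : t.Pairwise (· < ·) := (List.pairwise_cons.mp hu).2
    by_cases hx : x < a
    · rw [List.filter_cons_of_pos (by simpa using hx),
        List.filter_cons_of_neg (by simpa using Nat.not_le.mpr hx), List.cons_append]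
      exact congrArg (x :: ·) (ih ht)
    · push_neg at hx
      rw [List.filter_cons_of_neg (by simpa using Nat.not_lt.mpr hx),
        List.filter_cons_of_pos (by simpa using hx),
        List.filter_eq_nil_iff.mpr (fun y hy => by
          simpa using Nat.not_lt.mpr (le_trans hx (le_of_lt (hxt y hy)))),
        List.filter_eq_self.mpr (fun y hy => by
          simpa using le_trans hx (le_of_lt (hxt y hy)))]
      rfl

private lemma indexOf_aux (a : ℕ) : ∀ (l₁ l₂ : List ℕ), (∀ x ∈ l₁, x ≠ a) →
    List.idxOf a (l₁ ++ a :: l₂) = l₁.length := by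
  intro l₁
  induction l₁ with
  | nil => intro l₂ _; simp
  | cons x t ih =>
    intro l₂ hne
    rw [List.cons_append, List.idxOf_cons_ne _ (hne x List.mem_cons_self),
      ih l₂ (fun z hz => hne z (List.mem_cons_of_mem _ hz))]
    rfl

/-- The relabeling map: a cycle on `{a, …, a + j}`, identity elsewhere. -/
private def fm (a j x : ℕ) : ℕ :=
  if x < a then x else if x < a + j then x + 1 else if x = a + j then a else x

private lemma fm_inj (a j : ℕ) : Function.Injective (fm a j) := by
  intro x y h
  unfold fm at h
  split_ifs at h <;> omega

private lemma fm_lt_iff {a j x : ℕ} : fm a j x < a ↔ x < a := by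
  unfold fm; split_ifs <;> omega

private lemma fm_of_lt {a j x : ℕ} (h : x < a) : fm a j x = x := by
  unfold fm; split_ifs <;> omega

private lemma map_fm_low {a j s m : ℕ} (h : s + m ≤ a) :
    (List.range' s m).map (fm a j) = List.range' s m := by
  have : (List.range' s m).map (fm a j) = (List.range' s m).map id := by
    apply List.map_congr_left
    intro x hx
    have := mem_range1.mp hx
    exact fm_of_lt (by omega)
  simpa using this

private lemma map_fm_mid {a j m : ℕ} (h : m ≤ j) :
    (List.range' a m).map (fm a j) = List.range' (a + 1) m := by
  have : (List.range' a m).map (fm a j) = (List.range' a m).map (1 + ·) := by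
    apply List.map_congr_left
    intro x hx
    have := mem_range1.mp hx
    unfold fm; split_ifs <;> omega
  rw [this, List.map_add_range', Nat.add_comm]

private lemma map_fm_high {a j s m : ℕ} (h : a + j < s) :
    (List.range' s m).map (fm a j) = List.range' s m := by
  have : (List.range' s m).map (fm a j) = (List.range' s m).map id := by
    apply List.map_congr_left
    intro x hx
    have := mem_range1.mp hx
    rw [show fm a j x = x by unfold fm; split_ifs <;> omega]; rfl
  simpa using this

private lemma range_top_decomp {a j r : ℕ} (hj : j < r) :
    List.range' a r = List.range' a j ++ (a + j) :: List.range' (a + j + 1) (r - 1 - j) := by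
  have h1 : List.range' a j ++ List.range' (a + j) (r - j) = List.range' a r := by
    have := List.range'_append (s := a) (m := j) (n := r - j) (step := 1)
    simp only [Nat.mul_one, Nat.one_mul] at this
    rw [show j + (r - j) = r by omega] at this
    simpa [Nat.add_comm] using this
  rw [← h1]
  congr 1
  rw [show r - j = (r - 1 - j) + 1 by omega, List.range'_succ]

private lemma map_fm_top {a j r : ℕ} (hj : j < r) :
    (List.range' a r).map (fm a j)
      = List.range' (a + 1) j ++ a :: List.range' (a + j + 1) (r - 1 - j) := by
  rw [range_top_decomp hj, List.map_append, List.map_cons, map_fm_mid (le_refl j),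
    map_fm_high (by omega)]
  congr 2
  unfold fm; split_ifs <;> omega

private lemma Lj_perm {a j r : ℕ} (hj : j < r) :
    (List.range' (a + 1) j ++ a :: List.range' (a + j + 1) (r - 1 - j)).Perm
      (List.range' a r) := by
  refine List.perm_middle.trans ?_
  have h2 : List.range' (a + 1) j ++ List.range' (a + 1 + j) (r - 1 - j)
      = List.range' (a + 1) (r - 1) := by
    have := List.range'_append (s := a + 1) (m := j) (n := r - 1 - j) (step := 1)
    simp only [Nat.mul_one, Nat.one_mul] at this
    rw [show j + (r - 1 - j) = r - 1 by omega] at this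
    simpa [Nat.add_comm] using this
  rw [show a + j + 1 = a + 1 + j by omega, h2,
    show List.range' a r = a :: List.range' (a + 1) (r - 1) by
      rw [show r = (r - 1) + 1 by omega, List.range'_succ]; simp]

private lemma avoid_transfer {k a r j : ℕ}
    (τ : List ℕ) (hav : AvoidsSet {List.range' 1 k} τ)
    (hfil : τ.filter (fun x => decide (a ≤ x)) = List.range' a r) :
    AvoidsSet {List.range' 1 k} (τ.map (fm a j)) := by
  intro u hu hne hmem
  rw [Set.mem_singleton_iff] at hmem
  obtain ⟨hlen, hsort⟩ := sorted_of_stdize hmem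
  obtain ⟨v, hv, rfl⟩ := List.sublist_map_iff.mp hu
  set f := fm a j with hf
  set v₁ := v.filter (fun x => decide (x < a)) with hv₁
  set v₂ := v.filter (fun x => decide (a ≤ x)) with hv₂
  have hsplit_u := sorted_split a (v.map f) hsort
  have e1 : (v.map f).filter (fun x => decide (x < a)) = v₁.map f := by
    rw [List.filter_map]
    congr 1
    apply List.filter_congr
    intro x _
    simp only [Function.comp_apply]
    exact decide_eq_decide.mpr fm_lt_iff
  have e2 : (v.map f).filter (fun x => decide (a ≤ x)) = v₂.map f := by
    rw [List.filter_map]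
    congr 1
    apply List.filter_congr
    intro x _
    simp only [Function.comp_apply]
    exact decide_eq_decide.mpr (by rw [← Nat.not_lt, ← Nat.not_lt, fm_lt_iff])
  have hmapv₁ : v₁.map f = v₁ := by
    have : v₁.map f = v₁.map id := by
      apply List.map_congr_left
      intro x hx
      have hxa : x < a := by
        have := List.of_mem_filter hx
        simpa using this
      simpa using fm_of_lt hxa
    simpa using this
  have hv12 : v = v₁ ++ v₂ := by
    apply List.map_injective_iff.mpr (fm_inj a j)
    rw [List.map_append, ← e1, ← e2, ← hsplit_u]
  have hv1s : v₁.Pairwise (· < ·) := by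
    have h1 : ((v.map f).filter (fun x => decide (x < a))).Pairwise (· < ·) :=
      hsort.sublist List.filter_sublist
    rwa [e1, hmapv₁] at h1
  set m2 := v₂.length with hm2
  have hm2r : m2 ≤ r := by
    have : v₂ <+ List.range' a r := by
      rw [← hfil, hv₂]
      exact hv.filter _
    simpa using this.length_le
  have hsub : v₂.reverse ++ v₁.reverse <+ τ.reverse := by
    have := (hv12 ▸ hv).reverse
    simpa [List.reverse_append] using this
  have H := take_filter_sublist (fun x => decide (a ≤ x)) τ.reverse v₂.reverse v₁.reverse hsub
    (by
      intro x hx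
      have hx' : x ∈ v₂ := List.mem_reverse.mp hx
      rw [hv₂] at hx'
      simpa using (List.mem_filter.mp hx').2)
  rw [List.filter_reverse, hfil] at H
  have hdecomp : List.range' a r
      = List.range' a (r - m2) ++ List.range' (a + (r - m2)) m2 := by
    have := List.range'_append (s := a) (m := r - m2) (n := m2) (step := 1)
    simp only [Nat.mul_one, Nat.one_mul] at this
    rw [show r - m2 + m2 = r by omega] at this
    exact this.symm
  rw [hdecomp, List.reverse_append, List.length_reverse,
    List.take_left' (by simp [hm2])] at H
  have H2 : v₁ ++ List.range' (a + (r - m2)) m2 <+ τ := by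
    rw [← List.reverse_sublist]
    simpa [List.reverse_append] using H
  have hws : (v₁ ++ List.range' (a + (r - m2)) m2).Pairwise (· < ·) := by
    rw [List.pairwise_append]
    refine ⟨hv1s, List.pairwise_lt_range' 1 (by omega), ?_⟩
    intro x hx y hy
    have hxa : x < a := by simpa using List.of_mem_filter hx
    have hya : a + (r - m2) ≤ y := (mem_range1.mp hy).1
    omega
  have hwl : (v₁ ++ List.range' (a + (r - m2)) m2).length = k := by
    have : (v₁ ++ v₂).length = k := by
      rw [← hv12]
      simpa using hlen
    simpa using (by simpa using this : v₁.length + m2 = k)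
  refine hav (v₁ ++ List.range' (a + (r - m2)) m2) H2 ?_ ?_
  · intro hcon
    apply hne
    have hk0 : k = 0 := by rw [← hwl, hcon]; rfl
    have : (v.map f).length = 0 := by rw [hlen, hk0]
    simpa using this
  · rw [Set.mem_singleton_iff, stdize_sorted _ hws, hwl]

private lemma range_one_decomp {n r : ℕ} (hr1 : 1 ≤ r) (hrn : r ≤ n) :
    List.range' 1 n = List.range' 1 (n - r) ++ List.range' (n - r + 1) r := by
  have := List.range'_append (s := 1) (m := n - r) (n := r) (step := 1)
  simp only [Nat.mul_one, Nat.one_mul] at this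
  rw [show 1 + (n - r) = n - r + 1 by omega, show n - r + r = n by omega] at this
  exact this.symm

private instance : IsAntisymm ℕ (· < ·) := ⟨fun _ _ h1 h2 => absurd h2 (Nat.lt_asymm h1)⟩

private lemma filter_top {n r : ℕ} (hr1 : 1 ≤ r) (hrn : r ≤ n) (τ : List ℕ)
    (hperm : τ.Perm (List.range' 1 n))
    (hsort : (τ.filter (fun x => decide (n - r + 1 ≤ x))).Pairwise (· < ·)) :
    τ.filter (fun x => decide (n - r + 1 ≤ x)) = List.range' (n - r + 1) r := by
  have hpf : (τ.filter (fun x => decide (n - r + 1 ≤ x))).Perm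
      ((List.range' 1 n).filter (fun x => decide (n - r + 1 ≤ x))) := hperm.filter _
  have hcomp : (List.range' 1 n).filter (fun x => decide (n - r + 1 ≤ x))
      = List.range' (n - r + 1) r := by
    rw [range_one_decomp hr1 hrn, List.filter_append,
      List.filter_eq_nil_iff.mpr (fun x hx => by
        have := mem_range1.mp hx; simp; omega),
      List.filter_eq_self.mpr (fun x hx => by
        have := mem_range1.mp hx; simp; omega)]
    rfl
  rw [hcomp] at hpf
  exact List.Perm.eq_of_pairwise (fun _ _ _ _ h1 h2 => absurd h2 (Nat.lt_asymm h1)) hsort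
    (List.pairwise_lt_range' 1 (by omega)) hpf

private lemma sigma_upfix {a r j : ℕ} (hj : j < r) (τ : List ℕ)
    (hfil : τ.filter (fun x => decide (a ≤ x)) = List.range' a r) :
    (τ.map (fm a j)).filter (fun x => decide (a + 1 ≤ x))
      = List.range' (a + 1) (r - 1) := by
  rw [List.filter_map]
  have h1 : τ.filter ((fun x => decide (a + 1 ≤ x)) ∘ fm a j)
      = τ.filter (fun x => decide (¬ x = a + j) && decide (a ≤ x)) := by
    apply List.filter_congr
    intro x _
    simp only [Function.comp_apply]
    rw [Bool.eq_iff_iff]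
    simp only [Bool.and_eq_true, decide_eq_true_eq]
    unfold fm; split_ifs <;> omega
  rw [h1, ← List.filter_filter, hfil, range_top_decomp hj, List.filter_append,
    List.filter_eq_self.mpr (fun x hx => by
      have := mem_range1.mp hx; simp; omega),
    List.filter_cons_of_neg (by simp),
    List.filter_eq_self.mpr (fun x hx => by
      have := mem_range1.mp hx; simp; omega),
    List.map_append, map_fm_mid (le_refl j), map_fm_high (by omega)]
  have := List.range'_append (s := a + 1) (m := j) (n := r - 1 - j) (step := 1)
  simp only [Nat.mul_one, Nat.one_mul] at this
  rw [show j + (r - 1 - j) = r - 1 by omega] at this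
  rw [show a + j + 1 = a + 1 + j by omega, this]

private lemma perm_sigma {n r j : ℕ} (hr1 : 1 ≤ r) (hrn : r ≤ n) (hj : j < r) (τ : List ℕ)
    (hperm : τ.Perm (List.range' 1 n)) :
    (τ.map (fm (n - r + 1) j)).Perm (List.range' 1 n) := by
  refine (hperm.map _).trans ?_
  rw [range_one_decomp hr1 hrn, List.map_append, map_fm_low (by omega), map_fm_top hj]
  exact ((Lj_perm hj).append_left _).trans (by rw [← range_one_decomp hr1 hrn])

private lemma Lj_index {a j r : ℕ} :
    List.idxOf a (List.range' (a + 1) j ++ a :: List.range' (a + j + 1) (r - 1 - j)) = j := by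
  rw [indexOf_aux a _ _ (fun x hx => by have := mem_range1.mp hx; omega)]
  simp

private lemma inj_step {a r j j' : ℕ} (hj : j < r) (hj' : j' < r) (τ τ' : List ℕ)
    (hfil : τ.filter (fun x => decide (a ≤ x)) = List.range' a r)
    (hfil' : τ'.filter (fun x => decide (a ≤ x)) = List.range' a r)
    (heq : τ.map (fm a j) = τ'.map (fm a j')) : j = j' ∧ τ = τ' := by
  have hLL : (List.range' (a + 1) j ++ a :: List.range' (a + j + 1) (r - 1 - j))
      = (List.range' (a + 1) j' ++ a :: List.range' (a + j' + 1) (r - 1 - j')) := by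
    have h1 : (τ.map (fm a j)).filter (fun x => decide (a ≤ x))
        = (τ'.map (fm a j')).filter (fun x => decide (a ≤ x)) := by rw [heq]
    rw [List.filter_map, List.filter_map] at h1
    have e : ∀ (jj : ℕ) (σ : List ℕ), σ.filter ((fun x => decide (a ≤ x)) ∘ fm a jj)
        = σ.filter (fun x => decide (a ≤ x)) := by
      intro jj σ
      apply List.filter_congr
      intro x _
      simp only [Function.comp_apply]
      apply decide_eq_decide.mpr
      unfold fm; split_ifs <;> omega
    rw [e, e, hfil, hfil', map_fm_top hj, map_fm_top hj'] at h1
    exact h1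
  have hjj : j = j' := by
    have := congrArg (List.idxOf a) hLL
    rwa [Lj_index, Lj_index] at this
  subst hjj
  exact ⟨rfl, List.map_injective_iff.mpr (fm_inj a j) heq⟩

end Aux

theorem statement9 (k n r : ℕ) (hk : 1 ≤ k) (hr2 : 2 ≤ r) (hrn : r ≤ n) :
    r * {τ : List ℕ | IsPermWord n τ ∧ AvoidsSet {List.range' 1 k} τ ∧
          (upfix n r τ).Pairwise (· < ·)}.ncard ≤
      {τ : List ℕ | IsPermWord n τ ∧ AvoidsSet {List.range' 1 k} τ ∧
          (upfix n (r - 1) τ).Pairwise (· < ·)}.ncard := by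
  classical
  set A := {τ : List ℕ | IsPermWord n τ ∧ AvoidsSet {List.range' 1 k} τ ∧
      (upfix n r τ).Pairwise (· < ·)} with hA
  set B := {τ : List ℕ | IsPermWord n τ ∧ AvoidsSet {List.range' 1 k} τ ∧
      (upfix n (r - 1) τ).Pairwise (· < ·)} with hB
  set a := n - r + 1 with ha
  have hfin0 : {l : List ℕ | l.Perm (List.range' 1 n)}.Finite := by
    apply Set.Finite.ofFinset ((List.range' 1 n).permutations.toFinset)
    intro x
    simp [List.mem_permutations]
  have hAfin : A.Finite := hfin0.subset (fun τ hτ => hτ.1)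
  have hBfin : B.Finite := hfin0.subset (fun τ hτ => hτ.1)
  have hfilA : ∀ τ ∈ A, τ.filter (fun x => decide (a ≤ x)) = List.range' a r := by
    intro τ hτ
    exact filter_top (by omega) hrn τ hτ.1 hτ.2.2
  have key : ∀ j < r, ∀ τ ∈ A, (τ.map (fm a j)) ∈ B := by
    intro j hj τ hτ
    have hfil := hfilA τ hτ
    refine ⟨perm_sigma (by omega) hrn hj τ hτ.1, avoid_transfer τ hτ.2.1 hfil, ?_⟩
    show ((τ.map (fm a j)).filter (fun x => decide (n - (r - 1) + 1 ≤ x))).Pairwise (· < ·)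
    rw [show (fun x => decide (n - (r - 1) + 1 ≤ x)) = (fun x => decide (a + 1 ≤ x)) by
      funext x; congr 1; rw [show n - (r - 1) + 1 = a + 1 by omega]]
    rw [sigma_upfix hj τ hfil]
    exact List.pairwise_lt_range' 1 (by omega)
  set F : ℕ × List ℕ → List ℕ := fun p => p.2.map (fm a p.1) with hF
  set S : Finset (ℕ × List ℕ) := (Finset.range r) ×ˢ hAfin.toFinset with hS
  have hmemS : ∀ p : ℕ × List ℕ, p ∈ S ↔ p.1 < r ∧ p.2 ∈ A := by
    intro p
    rw [hS, Finset.mem_product, Finset.mem_range, Set.Finite.mem_toFinset]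
  have hinj : Set.InjOn F S := by
    rintro ⟨j, τ⟩ hp ⟨j', τ'⟩ hq hpq
    rw [Finset.mem_coe, hmemS] at hp hq
    obtain ⟨h1, h2⟩ := inj_step hp.1 hq.1 τ τ' (hfilA τ hp.2) (hfilA τ' hq.2) hpq
    exact Prod.ext h1 h2
  have himg : S.image F ⊆ hBfin.toFinset := by
    intro σ hσ
    rw [Finset.mem_image] at hσ
    obtain ⟨p, hp, rfl⟩ := hσ
    rw [hmemS] at hp
    exact Set.Finite.mem_toFinset _ |>.mpr (key p.1 hp.1 p.2 hp.2)
  calc r * A.ncard = S.card := by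
        rw [Set.ncard_eq_toFinset_card A hAfin, hS, Finset.card_product, Finset.card_range]
    _ = (S.image F).card := (Finset.card_image_of_injOn hinj).symm
    _ ≤ hBfin.toFinset.card := Finset.card_le_card himg
    _ = B.ncard := (Set.ncard_eq_toFinset_card B hBfin).symm
end

section
/- Let Π be a set of permutation patterns, the largest of which has size k. For a permutation s ∈ S_{n−1} and i ∈ {1,…,n}, j ∈ {1,…,n}, let s↑^i_j denote the standardization of the word obtained by inserting the value j−0.5 into position i of s; for a set A of permutations, A↑^i_j = {s↑^i_j : s ∈ A}. Then for every n > k, S_n(Π) = ⋂_{j=1}^{k+1} ⋃_{i=1}^{n} S_{n−1}(Π)↑^i_j. -/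
/-- `s↑^i_j`: insert the value `j - 0.5` into position `i` (1-indexed) of `s` and standardize;
equivalently, increment every letter of `s` that is `≥ j` and insert the letter `j` at
position `i`. -/
def insVal (i j : ℕ) (s : List ℕ) : List ℕ :=
  (s.map fun x => if j ≤ x then x + 1 else x).take (i - 1) ++
    j :: (s.map fun x => if j ≤ x then x + 1 else x).drop (i - 1)

/-! Deleting the letter `j` from a permutation word and lowering the letters above it inverts
`insVal`; the result is order-isomorphic to a subword, so a `Π`-avoider `τ ∈ S_n` lies in
`S_{n-1}(Π)↑^i_j` for every `j ≤ n`. Conversely a `Π`-hit in `τ` has at most `k` letters, hence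
misses some value `j ≤ k + 1`; writing `τ = σ↑^i_j`, the hit then comes from a hit in `σ`. -/

def incAbove (j x : ℕ) : ℕ := if j ≤ x then x + 1 else x

def decAbove (j x : ℕ) : ℕ := if j < x then x - 1 else x

lemma incAbove_strictMono (j : ℕ) : StrictMono (incAbove j) := by
  intro a b h
  unfold incAbove
  split_ifs <;> omega

lemma incAbove_decAbove {j x : ℕ} (h : x ≠ j) : incAbove j (decAbove j x) = x := by
  unfold incAbove decAbove
  split_ifs <;> omega

lemma insVal_eq (i j : ℕ) (s : List ℕ) :
    insVal i j s = (s.map (incAbove j)).take (i - 1) ++ j :: (s.map (incAbove j)).drop (i - 1) :=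
  rfl

lemma insVal_perm (i j : ℕ) (s : List ℕ) : (insVal i j s).Perm (j :: s.map (incAbove j)) := by
  rw [insVal_eq]
  exact List.perm_middle.trans (by rw [List.take_append_drop])

lemma stdize_map {f : ℕ → ℕ} (hf : StrictMono f) (u : List ℕ) : stdize (u.map f) = stdize u := by
  simp only [stdize, List.map_map, List.filter_map, List.length_map]
  refine List.map_congr_left fun x _ => congrArg List.length (List.filter_congr fun y _ => ?_)
  simp only [Function.comp_apply, hf.le_iff_le]

lemma stdize_length (u : List ℕ) : (stdize u).length = u.length :=
  List.length_map _

lemma AvoidsSet.sublist_s11 {P : Set (List ℕ)} {τ l : List ℕ} (h : AvoidsSet P τ) (hl : l.Sublist τ) :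
    AvoidsSet P l :=
  fun u hu => h u (hu.trans hl)

lemma AvoidsSet.of_map {P : Set (List ℕ)} {f : ℕ → ℕ} (hf : StrictMono f) {l : List ℕ}
    (h : AvoidsSet P (l.map f)) : AvoidsSet P l := by
  intro u hu hne
  rw [← stdize_map hf]
  exact h _ (hu.map f) (by simpa using hne)

lemma isPermWord_iff {n : ℕ} {w : List ℕ} :
    IsPermWord n w ↔ w.Nodup ∧ ∀ x, x ∈ w ↔ 1 ≤ x ∧ x ≤ n := by
  constructor
  · intro h
    refine ⟨h.nodup_iff.2 List.nodup_range', fun x => ?_⟩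
    rw [h.mem_iff, List.mem_range'_1]
    omega
  · rintro ⟨hw, hmem⟩
    refine (List.perm_ext_iff_of_nodup hw List.nodup_range').2 fun x => ?_
    rw [hmem, List.mem_range'_1]
    omega

lemma erase_range'_perm_map_incAbove {j m : ℕ} (hj : 1 ≤ j ∧ j ≤ m + 1) :
    ((List.range' 1 (m + 1)).erase j).Perm ((List.range' 1 m).map (incAbove j)) := by
  refine (List.perm_ext_iff_of_nodup (List.Nodup.erase j List.nodup_range')
    ((List.nodup_map_iff (incAbove_strictMono j).injective).2 List.nodup_range')).2 fun x => ?_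
  simp only [List.Nodup.mem_erase_iff List.nodup_range', List.mem_map, List.mem_range'_1, incAbove]
  constructor
  · rintro ⟨hxj, hx⟩
    by_cases hlt : x < j
    · exact ⟨x, by omega, if_neg (by omega)⟩
    · exact ⟨x - 1, by omega, by rw [if_pos (by omega)]; omega⟩
  · rintro ⟨y, hy, rfl⟩
    split_ifs <;> omega

theorem isPermWord_insVal_iff {i j n : ℕ} {σ : List ℕ} (hj : 1 ≤ j ∧ j ≤ n) :
    IsPermWord n (insVal i j σ) ↔ IsPermWord (n - 1) σ := by
  obtain ⟨m, rfl⟩ : ∃ m, n = m + 1 := ⟨n - 1, by omega⟩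
  have hjmem : j ∈ List.range' 1 (m + 1) := List.mem_range'_1.2 (by omega)
  rw [IsPermWord, (insVal_perm i j σ).congr_left, List.cons_perm_iff_perm_erase,
    (erase_range'_perm_map_incAbove hj).congr_right,
    List.map_perm_map_iff (incAbove_strictMono j).injective, Nat.add_sub_cancel]
  exact and_iff_right hjmem

lemma map_incAbove_map_decAbove {j : ℕ} {l : List ℕ} (hj : j ∉ l) :
    (l.map (decAbove j)).map (incAbove j) = l := by
  rw [List.map_map]
  refine (List.map_congr_left fun x hx => ?_).trans (List.map_id l)
  exact incAbove_decAbove fun h => hj (h ▸ hx)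

lemma insVal_map_decAbove {j : ℕ} {A B : List ℕ} (hj : j ∉ A ++ B) :
    insVal (A.length + 1) j ((A ++ B).map (decAbove j)) = A ++ j :: B := by
  rw [insVal_eq, map_incAbove_map_decAbove hj, Nat.add_sub_cancel, List.take_left,
    List.drop_left]

lemma List.Sublist.of_append_cons_of_notMem {α : Type*} {u A B : List α} {a : α}
    (h : u.Sublist (A ++ a :: B)) (ha : a ∉ u) : u.Sublist (A ++ B) := by
  obtain ⟨u₁, u₂, rfl, h₁, h₂⟩ := List.sublist_append_iff.1 h
  rcases List.sublist_cons_iff.1 h₂ with h₂ | ⟨r, rfl, -⟩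
  · exact h₁.append h₂
  · exact absurd (List.mem_append_right _ List.mem_cons_self) ha

lemma exists_map_incAbove_of_sublist_insVal {u σ : List ℕ} {i j : ℕ}
    (hu : u.Sublist (insVal i j σ)) (hj : j ∉ u) :
    ∃ u' : List ℕ, u'.Sublist σ ∧ u = u'.map (incAbove j) := by
  rw [insVal_eq] at hu
  have := hu.of_append_cons_of_notMem hj
  rwa [List.take_append_drop, List.sublist_map_iff] at this

lemma exists_mem_Icc_notMem_of_length_le {u : List ℕ} {k : ℕ} (hu : u.length ≤ k) :
    ∃ j ∈ Set.Icc 1 (k + 1), j ∉ u := by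
  have hcard : u.toFinset.card < (Finset.Icc 1 (k + 1)).card := by
    rw [Nat.card_Icc]
    exact u.toFinset_card_le.trans_lt (by omega)
  obtain ⟨j, hj, hju⟩ := Finset.exists_mem_notMem_of_card_lt_card hcard
  exact ⟨j, Finset.mem_Icc.1 hj, fun h => hju (List.mem_toFinset.2 h)⟩

theorem exists_insVal_eq_of_avoidsSet {P : Set (List ℕ)} {n j : ℕ} {τ : List ℕ}
    (hτ : IsPermWord n τ) (hτP : AvoidsSet P τ) (hj : 1 ≤ j ∧ j ≤ n) :
    ∃ i ∈ Set.Icc 1 n, ∃ σ, (IsPermWord (n - 1) σ ∧ AvoidsSet P σ) ∧ insVal i j σ = τ := by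
  obtain ⟨A, B, rfl⟩ := List.append_of_mem ((isPermWord_iff.1 hτ).2 j |>.2 hj)
  have hjAB : j ∉ A ++ B := List.nodup_middle.1 (isPermWord_iff.1 hτ).1 |> List.nodup_cons.1 |>.1
  have hins := insVal_map_decAbove hjAB
  refine ⟨A.length + 1, ⟨by omega, ?_⟩, _, ⟨?_, ?_⟩, hins⟩
  · have := hτ.length_eq
    simp only [List.length_append, List.length_cons, List.length_range'] at this
    omega
  · rwa [← isPermWord_insVal_iff hj, hins]
  · refine AvoidsSet.of_map (incAbove_strictMono j) (hτP.sublist_s11 ?_)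
    rw [map_incAbove_map_decAbove hjAB]
    exact (List.sublist_cons_self j B).append_left A

theorem avoidsSet_of_forall_insVal_eq {P : Set (List ℕ)} {k : ℕ}
    (hP : ∀ π ∈ P, π.length ≤ k) {τ : List ℕ}
    (h : ∀ j ∈ Set.Icc 1 (k + 1), ∃ i σ, AvoidsSet P σ ∧ insVal i j σ = τ) :
    AvoidsSet P τ := by
  intro u hu hne hmem
  obtain ⟨j, hj, hju⟩ := exists_mem_Icc_notMem_of_length_le (stdize_length u ▸ hP _ hmem)
  obtain ⟨i, σ, hσ, rfl⟩ := h j hj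
  obtain ⟨u', hu', rfl⟩ := exists_map_incAbove_of_sublist_insVal hu hju
  rw [stdize_map (incAbove_strictMono j)] at hmem
  exact hσ u' hu' (by simpa using hne) hmem

theorem statement11_general (P : Set (List ℕ)) (k : ℕ)
    (hP : ∀ π ∈ P, IsPermWord π.length π ∧ 1 ≤ π.length ∧ π.length ≤ k)
    (n : ℕ) (hn : k < n) :
    {τ : List ℕ | IsPermWord n τ ∧ AvoidsSet P τ} =
      ⋂ j ∈ Set.Icc 1 (k + 1), ⋃ i ∈ Set.Icc 1 n,
        insVal i j '' {σ : List ℕ | IsPermWord (n - 1) σ ∧ AvoidsSet P σ} := by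
  ext τ
  simp only [Set.mem_ofPred_eq, Set.mem_iInter, Set.mem_iUnion, Set.mem_image, exists_prop]
  constructor
  · rintro ⟨hτ, hτP⟩ j hj
    exact exists_insVal_eq_of_avoidsSet hτ hτP ⟨hj.1, hj.2.trans hn⟩
  · intro h
    obtain ⟨i, -, σ, ⟨hσ, -⟩, rfl⟩ := h 1 ⟨le_rfl, by omega⟩
    refine ⟨(isPermWord_insVal_iff ⟨le_rfl, by omega⟩).2 hσ,
      avoidsSet_of_forall_insVal_eq (fun π hπ => (hP π hπ).2.2) fun j hj => ?_⟩
    obtain ⟨i', -, σ', ⟨-, hσ'⟩, heq⟩ := h j hj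
    exact ⟨i', σ', hσ', heq⟩

theorem statement11 (P : Set (List ℕ)) (k : ℕ)
    (hP : ∀ π ∈ P, IsPermWord π.length π ∧ 1 ≤ π.length ∧ π.length ≤ k)
    (hk : ∃ π ∈ P, π.length = k) (n : ℕ) (hn : k < n) :
    {τ : List ℕ | IsPermWord n τ ∧ AvoidsSet P τ} =
      ⋂ j ∈ Set.Icc 1 (k + 1), ⋃ i ∈ Set.Icc 1 n,
        insVal i j '' {σ : List ℕ | IsPermWord (n - 1) σ ∧ AvoidsSet P σ} :=
  statement11_general P k hP n hn
end

section
/- Let τ ∈ S_n, let i ∈ {1,…,n+1} and j ∈ {1,…,n}, and let p be the position in τ of the letter n−j+1 (the j-th largest letter of τ). Then (τ↑^i)↓_{j+1} = (τ↓_j)↑^i if i ≤ p, and (τ↑^i)↓_{j+1} = (τ↓_j)↑^{i−1} if i > p. -/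
/-- `τ↑^i`: insert the letter `|τ| + 1` into the `i`-th position (1-indexed) of `τ`. -/
def insOp (i : ℕ) (τ : List ℕ) : List ℕ := τ.take (i - 1) ++ (τ.length + 1) :: τ.drop (i - 1)

lemma stdize_insert_max (a b : List ℕ) (c : ℕ) (h : ∀ x ∈ a ++ b, x < c) :
    stdize (a ++ c :: b) =
      (stdize (a ++ b)).take a.length ++ ((a ++ b).length + 1) :: (stdize (a ++ b)).drop a.length := by
  have hfil : ∀ x ∈ a ++ b,
      ((a ++ c :: b).filter fun y => decide (y ≤ x)).length
        = ((a ++ b).filter fun y => decide (y ≤ x)).length := by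
    intro x hx
    have hc : ¬ c ≤ x := Nat.not_le.2 (h x hx)
    simp [List.filter_append, List.filter_cons, hc]
  have hc : ((a ++ c :: b).filter fun y => decide (y ≤ c)).length = (a ++ b).length + 1 := by
    rw [List.filter_eq_self.2 ?_]
    · simp [Nat.add_comm, Nat.add_assoc]
    · intro y hy
      simp only [decide_eq_true_eq]
      rcases List.mem_append.1 hy with h1 | h2
      · exact (h y (List.mem_append_left _ h1)).le
      · rcases List.mem_cons.1 h2 with rfl | h3
        · exact le_rfl
        · exact (h y (List.mem_append_right _ h3)).le
  unfold stdize
  rw [List.map_append, List.map_cons, List.map_append,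
    List.take_left' (by simp), List.drop_left' (by simp)]
  congr 1
  · exact List.map_congr_left fun x hx => hfil x (List.mem_append_left _ hx)
  · rw [hc]
    congr 1
    exact List.map_congr_left fun x hx => hfil x (List.mem_append_right _ hx)

/-- commutation of insertion and deletion. `p = τ.indexOf (n - j + 1) + 1`
is the 1-indexed position in `τ` of its `j`-th largest letter. -/
theorem statement16 (n i j : ℕ) (τ : List ℕ) (hτ : IsPermWord n τ)
    (hi1 : 1 ≤ i) (hi2 : i ≤ n + 1) (hj1 : 1 ≤ j) (hj2 : j ≤ n) :
    (i ≤ τ.idxOf (n - j + 1) + 1 →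
      delOp (n + 1) (j + 1) (insOp i τ) = insOp i (delOp n j τ)) ∧
    (τ.idxOf (n - j + 1) + 1 < i →
      delOp (n + 1) (j + 1) (insOp i τ) = insOp (i - 1) (delOp n j τ)) := by
  set m := n - j + 1 with hm_def
  have hmn : m ≤ n := by omega
  have hlen : τ.length = n := by
    have := hτ.length_eq; simpa using this
  have hmem : m ∈ τ := hτ.mem_iff.2 (List.mem_range'_1.2 (by omega))
  have hbound : ∀ x ∈ τ, x < n + 1 := by
    intro x hx
    have := List.mem_range'_1.1 (hτ.mem_iff.1 hx)
    omega
  have hp : τ.idxOf m < n := hlen ▸ List.idxOf_lt_length_iff.2 hmem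
  have hmne : m ≠ n + 1 := by omega
  have hmsub : (n + 1) - (j + 1) + 1 = m := by omega
  have hlen_erase : (τ.erase m).length = n - 1 := by
    rw [List.length_erase, if_pos hmem, hlen]
  have hlen_del : (stdize (τ.erase m)).length = n - 1 := by
    unfold stdize
    rw [List.length_map, hlen_erase]
  have hsub_erase : ∀ x ∈ τ.erase m, x < n + 1 := fun x hx =>
    hbound x (List.erase_subset hx)
  constructor
  · intro hile
    have hk : i - 1 ≤ τ.idxOf m := by omega
    have hkn : i - 1 ≤ n := by omega
    have hnot : m ∉ τ.take (i - 1) := by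
      intro hcon
      have h1 : τ.idxOf m = (τ.take (i-1)).idxOf m := by
        conv_lhs => rw [← List.take_append_drop (i-1) τ]
        rw [List.idxOf_append_of_mem hcon]
      have h2 : (τ.take (i-1)).idxOf m < (τ.take (i-1)).length :=
        List.idxOf_lt_length_iff.2 hcon
      have h3 : (τ.take (i-1)).length ≤ i - 1 := by simp
      omega
    have e2 : τ.erase m = τ.take (i-1) ++ (τ.drop (i-1)).erase m := by
      conv_lhs => rw [← List.take_append_drop (i-1) τ]
      rw [List.erase_append_right _ hnot]
    have e1 : (insOp i τ).erase m = τ.take (i-1) ++ (n+1) :: (τ.drop (i-1)).erase m := by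
      unfold insOp
      rw [hlen, List.erase_append_right _ hnot,
        List.erase_cons_tail (by simpa using (Ne.symm hmne))]
    have hlt : i - 1 ≤ (τ.erase m).length := by omega
    unfold delOp
    rw [hmsub, e1, stdize_insert_max _ _ _ (by rw [← e2]; exact hsub_erase), ← e2]
    unfold insOp
    rw [← hm_def, hlen_del]
    have hlentake : (τ.take (i-1)).length = i - 1 := by simp; omega
    rw [hlentake, hlen_erase]
  · intro hgt
    have hk : τ.idxOf m < i - 1 := by omega
    have hkn : i - 1 ≤ n := by omega
    have hmemtake : m ∈ τ.take (i - 1) := by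
      have hlt' : τ.idxOf m < (τ.take (i-1)).length := by
        simp [hlen]; omega
      have : (τ.take (i-1))[τ.idxOf m] = m := by
        rw [List.getElem_take]
        exact List.getElem_idxOf (by omega)
      exact this ▸ List.getElem_mem hlt'
    have e2 : τ.erase m = (τ.take (i-1)).erase m ++ τ.drop (i-1) := by
      conv_lhs => rw [← List.take_append_drop (i-1) τ]
      rw [List.erase_append_left _ hmemtake]
    have e1 : (insOp i τ).erase m = (τ.take (i-1)).erase m ++ (n+1) :: τ.drop (i-1) := by
      unfold insOp
      rw [hlen, List.erase_append_left _ hmemtake]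
    unfold delOp
    rw [hmsub, e1, stdize_insert_max _ _ _ (by rw [← e2]; exact hsub_erase), ← e2]
    unfold insOp
    rw [← hm_def, hlen_del]
    have hlentake : ((τ.take (i-1)).erase m).length = i - 2 := by
      rw [List.length_erase, if_pos hmemtake]
      simp [hlen]; omega
    rw [hlentake, hlen_erase]
    congr 2
end
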